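/- arXiv:1108.3742 — 5 statements merged into one kernel-verified Lean document; each statement's English description precedes it below -/
import Mathlib

section
/- For any real constant c with 0 < c ≤ 1 and any natural number L ≥ 1, the sum ∑_{k=1}^{L} C(L,k) (−1)^{k+1} c^k / k is bounded below by log(L) + log(c). -/
/-!
Pascal's rule turns the alternating binomial sum into `∑_{p=1}^{L} (1 - (1 - c)^p) / p`.
The part `∑ 1/p` is a harmonic number, at least `log L`, and the part `∑ (1 - c)^p / p` is a
partial sum of the nonnegative series for `-log c = -log (1 - (1 - c))`, hence at most `-log c`.
-/

open Finset

theorem sum_Icc_one_eq_sum_range {M : Type*} [AddCommMonoid M] (f : ℕ → M) (n : ℕ) :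
    ∑ p ∈ Icc 1 n, f p = ∑ i ∈ range n, f (i + 1) := by
  rw [← Ico_add_one_right_eq_Icc, sum_Ico_eq_sum_range, Nat.add_sub_cancel]
  simp only [add_comm]

theorem sum_Icc_choose_mul_neg_one_pow_mul_pow {R : Type*} [CommRing R] (x : R) (n : ℕ) :
    ∑ k ∈ Icc 1 n, (n.choose k : R) * (-1) ^ (k + 1) * x ^ k = 1 - (1 - x) ^ n := by
  have hbinom : (1 - x) ^ n = ∑ k ∈ range (n + 1), (-x) ^ k * (n.choose k : R) := by
    simpa [sub_eq_neg_add, mul_comm] using add_pow (-x) 1 n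
  rw [hbinom, sum_range_succ', sum_Icc_one_eq_sum_range]
  simp only [pow_zero, Nat.choose_zero_right, Nat.cast_one, mul_one, sub_add_cancel_right,
    ← sum_neg_distrib]
  refine sum_congr rfl fun k _ => ?_
  rw [neg_pow]
  ring

theorem choose_succ_div_natCast {K : Type*} [Field K] [CharZero K] (n : ℕ) {k : ℕ} (hk : k ≠ 0) :
    ((n + 1).choose k : K) / k = (n.choose k : K) / k + ((n + 1).choose k : K) / (n + 1) := by
  obtain ⟨j, rfl⟩ := Nat.exists_eq_add_one_of_ne_zero hk
  have hpascal : ((n + 1).choose (j + 1) : K) = n.choose j + n.choose (j + 1) := by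
    exact_mod_cast Nat.choose_succ_succ' n j
  have habsorb : ((n : K) + 1) * n.choose j = (n + 1).choose (j + 1) * (j + 1) := by
    exact_mod_cast Nat.add_one_mul_choose_eq n j
  push_cast
  field_simp
  linear_combination habsorb + ((n : K) + 1) * hpascal

theorem sum_Icc_choose_mul_neg_one_pow_mul_pow_div {K : Type*} [Field K] [CharZero K]
    (x : K) (n : ℕ) :
    ∑ k ∈ Icc 1 n, (n.choose k : K) * (-1) ^ (k + 1) * x ^ k / k
      = ∑ p ∈ Icc 1 n, (1 - (1 - x) ^ p) / p := by
  induction n with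
  | zero => simp
  | succ n ih =>
    have hsplit : ∀ k ∈ Icc 1 (n + 1), ((n + 1).choose k : K) * (-1) ^ (k + 1) * x ^ k / k
        = (n.choose k : K) * (-1) ^ (k + 1) * x ^ k / k
          + ((n + 1).choose k : K) * (-1) ^ (k + 1) * x ^ k / (n + 1) := by
      intro k hk
      have hk0 : k ≠ 0 := by rw [mem_Icc] at hk; omega
      rw [mul_assoc, mul_div_right_comm, choose_succ_div_natCast n hk0]
      ring
    -- the second sum is exactly the new summand `(1 - (1 - x) ^ (n + 1)) / (n + 1)` on the right
    rw [sum_congr rfl hsplit, sum_add_distrib, ← sum_div, sum_Icc_choose_mul_neg_one_pow_mul_pow,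
      sum_Icc_succ_top (by omega), sum_Icc_succ_top (by omega), Nat.choose_succ_self, ih]
    push_cast
    ring

theorem log_le_sum_Icc_inv (n : ℕ) : Real.log n ≤ ∑ i ∈ Icc 1 n, (i : ℝ)⁻¹ := by
  simpa [harmonic_eq_sum_Icc] using log_le_harmonic_floor n n.cast_nonneg

theorem sum_Icc_pow_div_le_neg_log {x : ℝ} (hx0 : 0 ≤ x) (hx1 : x < 1) (n : ℕ) :
    ∑ p ∈ Icc 1 n, x ^ p / p ≤ -Real.log (1 - x) := by
  rw [sum_Icc_one_eq_sum_range]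
  push_cast
  exact sum_le_hasSum _ (fun i _ => by positivity)
    (Real.hasSum_pow_div_log_of_abs_lt_one (by rwa [abs_of_nonneg hx0]))

theorem stmt_3_general (c : ℝ) (hc0 : 0 < c) (hc1 : c ≤ 1) (L : ℕ) :
    Real.log L + Real.log c
      ≤ ∑ k ∈ Finset.Icc 1 L, (L.choose k : ℝ) * (-1) ^ (k + 1) * c ^ k / k := by
  have hsplit : ∑ p ∈ Icc 1 L, (1 - (1 - c) ^ p) / p
      = ∑ p ∈ Icc 1 L, (p : ℝ)⁻¹ - ∑ p ∈ Icc 1 L, (1 - c) ^ p / p := by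
    rw [← sum_sub_distrib]
    exact sum_congr rfl fun p _ => by ring
  have htail := sum_Icc_pow_div_le_neg_log (x := 1 - c) (by linarith) (by linarith) L
  rw [sub_sub_cancel] at htail
  rw [sum_Icc_choose_mul_neg_one_pow_mul_pow_div, hsplit]
  linarith [log_le_sum_Icc_inv L]

/-- Lower bound log L + log c for the alternating binomial sum. -/
theorem stmt_3 (c : ℝ) (hc0 : 0 < c) (hc1 : c ≤ 1) (L : ℕ) (hL : 1 ≤ L) :
    Real.log L + Real.log c
      ≤ ∑ k ∈ Finset.Icc 1 L, (L.choose k : ℝ) * (-1) ^ (k + 1) * c ^ k / k :=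
  stmt_3_general c hc0 hc1 L
end

section
/- Let X be a nonnegative random variable with values in (0,1] whose distribution function satisfies Pr{X ≤ x} ≥ 1 − (1 − c x^{m})^{L} for all x ∈ [0, c^{−1/m}], where 0 < c ≤ 1, m ≥ 1 is an integer, and L ≥ 1. Then E[−log X] ≥ (1/m) ∑_{k=1}^{L} C(L,k)(−1)^{k+1} c^k / k, and consequently E[−log X] ≥ (log L + log c)/m. -/
/-!
Layer cake: `E[-log X] = ∫₀^∞ Pr{X ≤ e^{-t}} dt ≥ ∫₀^∞ 1 - (1 - c e^{-mt})^L dt`, and expanding the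
binomial the last integral is `(1/m) ∑_{k=1}^{L} C(L,k) (-1)^{k+1} c^k / k`.

For the logarithmic bound, induction on `L` (Pascal's rule and `C(L,k)/(k+1) = C(L+1,k+1)/(L+1)`)
rewrites that sum as `∑_{j=1}^{L} (1 - (1-c)^j) / j = H_L - ∑_{j=1}^{L} (1-c)^j / j`. The subtracted
sum is a partial sum of the series of `-log c`, and `H_L ≥ log L`.
-/

open MeasureTheory Real Set

theorem Finset.sum_Icc_one_eq_sum_range {M : Type*} [AddCommMonoid M] (L : ℕ) (f : ℕ → M) :
    ∑ k ∈ Finset.Icc 1 L, f k = ∑ k ∈ Finset.range L, f (k + 1) := by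
  rw [← Finset.Ico_add_one_right_eq_Icc, Finset.sum_Ico_eq_sum_range, Nat.add_sub_cancel]
  simp only [add_comm 1]

section BinomialSums

open Finset

theorem one_sub_one_sub_pow_eq_sum_range {R : Type*} [CommRing R] (L : ℕ) (u : R) :
    1 - (1 - u) ^ L = ∑ k ∈ range L, (L.choose (k + 1) : R) * (-1) ^ k * u ^ (k + 1) := by
  rw [sub_eq_neg_add 1 u, add_pow, sum_range_succ']
  simp only [one_pow, mul_one, pow_zero, Nat.choose_zero_right, Nat.cast_one,
    sub_add_cancel_right, ← sum_neg_distrib]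
  refine sum_congr rfl fun k _ => ?_
  rw [neg_pow, pow_succ (-1 : R)]
  ring

theorem sum_range_choose_mul_div_eq_sum_range {K : Type*} [Field K] [CharZero K] (L : ℕ) (u : K) :
    ∑ k ∈ range L, (L.choose (k + 1) : K) * (-1) ^ k * u ^ (k + 1) / (k + 1) =
      ∑ j ∈ range L, (1 - (1 - u) ^ (j + 1)) / (j + 1) := by
  induction L with
  | zero => simp
  | succ L ih =>
    have hpascal (k : ℕ) : ((L + 1).choose (k + 1) : K) = L.choose k + L.choose (k + 1) := by
      rw [Nat.choose_succ_succ, Nat.cast_add]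
    have hchoose (k : ℕ) :
        ((L : K) + 1) * L.choose k = (L + 1).choose (k + 1) * ((k : K) + 1) := by
      exact_mod_cast Nat.add_one_mul_choose_eq L k
    have hshift (k : ℕ) : (L.choose k : K) * (-1) ^ k * u ^ (k + 1) / (k + 1) =
        ((L + 1).choose (k + 1) : K) * (-1) ^ k * u ^ (k + 1) / (L + 1) := by
      rw [div_eq_div_iff (Nat.cast_add_one_ne_zero k) (Nat.cast_add_one_ne_zero L)]
      linear_combination (-1) ^ k * u ^ (k + 1) * hchoose k
    simp only [hpascal, add_mul, add_div, sum_add_distrib]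
    rw [sum_congr rfl fun k _ => hshift k, ← sum_div, ← one_sub_one_sub_pow_eq_sum_range,
      sum_range_succ, sum_range_succ _ L, ih, Nat.choose_succ_self]
    push_cast
    ring

theorem sum_range_pow_div_le_neg_log {x : ℝ} (hx0 : 0 ≤ x) (hx1 : x < 1) (n : ℕ) :
    ∑ j ∈ range n, x ^ (j + 1) / (j + 1) ≤ -log (1 - x) :=
  sum_le_hasSum _ (fun _ _ => by positivity)
    (hasSum_pow_div_log_of_abs_lt_one (by rwa [abs_of_nonneg hx0]))

theorem log_le_harmonic (n : ℕ) : log n ≤ harmonic n := by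
  simpa using log_le_harmonic_floor n n.cast_nonneg

theorem log_add_log_le_sum_range_choose (L : ℕ) {c : ℝ} (hc0 : 0 < c) (hc1 : c ≤ 1) :
    log L + log c ≤ ∑ k ∈ range L, (L.choose (k + 1) : ℝ) * (-1) ^ k * c ^ (k + 1) / (k + 1) := by
  have htail := sum_range_pow_div_le_neg_log (sub_nonneg.2 hc1) (sub_lt_self 1 hc0) L
  rw [sub_sub_cancel] at htail
  have hharm : (harmonic L : ℝ) = ∑ j ∈ range L, 1 / ((j : ℝ) + 1) := by
    simp [harmonic]
  rw [sum_range_choose_mul_div_eq_sum_range]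
  simp only [sub_div, sum_sub_distrib]
  linarith [log_le_harmonic L]

end BinomialSums

theorem setIntegral_Ioi_le_integral_of_le_measureReal {α : Type*} [MeasurableSpace α]
    {μ : Measure α} {f : α → ℝ} (hf : Integrable f μ) (hf0 : 0 ≤ᵐ[μ] f) {g : ℝ → ℝ}
    (hg : IntegrableOn g (Ioi 0)) (hg0 : ∀ t ∈ Ioi 0, 0 ≤ g t)
    (hgf : ∀ t ∈ Ioi 0, g t ≤ μ.real {a | t ≤ f a}) :
    ∫ t in Ioi 0, g t ≤ ∫ a, f a ∂μ := by
  refine (ENNReal.ofReal_le_ofReal_iff (integral_nonneg_of_ae hf0)).1 ?_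
  rw [ofReal_integral_eq_lintegral_ofReal hg (ae_restrict_of_forall_mem measurableSet_Ioi hg0),
    ofReal_integral_eq_lintegral_ofReal hf hf0,
    lintegral_eq_lintegral_meas_le μ hf0 hf.aemeasurable]
  refine setLIntegral_mono' measurableSet_Ioi fun t ht => ?_
  exact (ENNReal.ofReal_le_ofReal (hgf t ht)).trans ENNReal.ofReal_toReal_le

theorem measureReal_le_neg_log_eq_measureReal_le_exp_neg {Ω : Type*} [MeasurableSpace Ω]
    {μ : Measure Ω} {X : Ω → ℝ} (hX : ∀ᵐ ω ∂μ, 0 < X ω) (t : ℝ) :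
    μ.real {ω | t ≤ -log (X ω)} = μ.real {ω | X ω ≤ exp (-t)} := by
  refine measureReal_congr (hX.mono fun ω hω => ?_)
  change (t ≤ -log (X ω)) = (X ω ≤ exp (-t))
  rw [← log_le_iff_le_exp hω]
  simp [le_neg]

theorem integrableOn_exp_neg_pow_Ioi {n : ℕ} (hn : n ≠ 0) :
    IntegrableOn (fun t => exp (-t) ^ n) (Ioi 0) := by
  simpa [← exp_nat_mul, mul_comm] using exp_neg_integrableOn_Ioi 0 (b := n) (by positivity)

theorem integral_exp_neg_pow_Ioi {n : ℕ} (hn : n ≠ 0) :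
    ∫ t in Ioi 0, exp (-t) ^ n = 1 / n := by
  simpa [← exp_nat_mul, mul_comm] using integral_exp_mul_Ioi (a := -n) (by simp; positivity) 0

section ExpTail

variable {m : ℕ} (L : ℕ) (c : ℝ)

theorem one_sub_one_sub_mul_exp_neg_pow_pow_eq_sum (t : ℝ) :
    1 - (1 - c * exp (-t) ^ m) ^ L =
      ∑ k ∈ Finset.range L, (L.choose (k + 1) : ℝ) * (-1) ^ k * c ^ (k + 1) *
        exp (-t) ^ (m * (k + 1)) := by
  simp only [one_sub_one_sub_pow_eq_sum_range, mul_pow, pow_mul, mul_assoc]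

theorem one_sub_one_sub_mul_exp_neg_pow_pow_nonneg (hc0 : 0 ≤ c) (hc1 : c ≤ 1) {t : ℝ}
    (ht : 0 ≤ t) : 0 ≤ 1 - (1 - c * exp (-t) ^ m) ^ L := by
  have hexp : exp (-t) ^ m ≤ 1 := pow_le_one₀ (exp_pos _).le (exp_le_one_iff.2 (neg_nonpos.2 ht))
  have hu : c * exp (-t) ^ m ≤ 1 := mul_le_one₀ hc1 (by positivity) hexp
  exact sub_nonneg.2 (pow_le_one₀ (sub_nonneg.2 hu) (sub_le_self _ (by positivity)))

theorem integrableOn_one_sub_one_sub_mul_exp_neg_pow_pow (hm : m ≠ 0) :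
    IntegrableOn (fun t => 1 - (1 - c * exp (-t) ^ m) ^ L) (Ioi 0) := by
  simp only [one_sub_one_sub_mul_exp_neg_pow_pow_eq_sum]
  exact integrable_finsetSum _ fun k _ =>
    (integrableOn_exp_neg_pow_Ioi (by positivity)).const_mul _

theorem integral_one_sub_one_sub_mul_exp_neg_pow_pow (hm : m ≠ 0) :
    ∫ t in Ioi 0, 1 - (1 - c * exp (-t) ^ m) ^ L =
      1 / m * ∑ k ∈ Finset.range L,
        (L.choose (k + 1) : ℝ) * (-1) ^ k * c ^ (k + 1) / (k + 1) := by
  simp only [one_sub_one_sub_mul_exp_neg_pow_pow_eq_sum]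
  rw [integral_finsetSum _ fun k _ => (integrableOn_exp_neg_pow_Ioi (by positivity)).const_mul _,
    Finset.mul_sum]
  refine Finset.sum_congr rfl fun k _ => ?_
  rw [integral_const_mul, integral_exp_neg_pow_Ioi (by positivity)]
  push_cast
  field_simp

end ExpTail

theorem stmt_6_general {Ω : Type*} [MeasurableSpace Ω] (μ : Measure Ω) [IsProbabilityMeasure μ]
    (X : Ω → ℝ)
    (hrange : ∀ᵐ ω ∂μ, 0 < X ω ∧ X ω ≤ 1)
    (c : ℝ) (hc0 : 0 < c) (hc1 : c ≤ 1) (m L : ℕ) (hm : 1 ≤ m)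
    (hcdf : ∀ x : ℝ, x ∈ Set.Icc 0 (c ^ (-(1 : ℝ) / m)) →
      1 - (1 - c * x ^ m) ^ L ≤ (μ {ω | X ω ≤ x}).toReal)
    (hint : Integrable (fun ω => -Real.log (X ω)) μ) :
    (1 / (m : ℝ)) * ∑ k ∈ Finset.Icc 1 L, (L.choose k : ℝ) * (-1) ^ (k + 1) * c ^ k / k
        ≤ ∫ ω, -Real.log (X ω) ∂μ ∧
    (Real.log L + Real.log c) / m ≤ ∫ ω, -Real.log (X ω) ∂μ := by
  have hm0 : m ≠ 0 := Nat.one_le_iff_ne_zero.mp hm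
  have hsum : ∑ k ∈ Finset.Icc 1 L, (L.choose k : ℝ) * (-1) ^ (k + 1) * c ^ k / k =
      ∑ k ∈ Finset.range L, (L.choose (k + 1) : ℝ) * (-1) ^ k * c ^ (k + 1) / (k + 1) := by
    rw [Finset.sum_Icc_one_eq_sum_range]
    push_cast
    simp [pow_succ]
  have htail (t : ℝ) (ht : t ∈ Ioi 0) :
      1 - (1 - c * exp (-t) ^ m) ^ L ≤ μ.real {ω | t ≤ -log (X ω)} := by
    have hexp_mem : exp (-t) ∈ Icc 0 (c ^ (-(1 : ℝ) / m)) :=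
      ⟨(exp_pos _).le, (exp_le_one_iff.2 (neg_nonpos.2 (le_of_lt ht))).trans
        (one_le_rpow_of_pos_of_le_one_of_nonpos hc0 hc1
          (div_nonpos_of_nonpos_of_nonneg (by norm_num) m.cast_nonneg))⟩
    rw [measureReal_le_neg_log_eq_measureReal_le_exp_neg (hrange.mono fun _ hω => hω.1)]
    exact hcdf _ hexp_mem
  have hmain := setIntegral_Ioi_le_integral_of_le_measureReal hint
    (hrange.mono fun ω hω => neg_nonneg.2 (log_nonpos hω.1.le hω.2))
    (integrableOn_one_sub_one_sub_mul_exp_neg_pow_pow L c hm0)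
    (fun t ht => one_sub_one_sub_mul_exp_neg_pow_pow_nonneg L c hc0.le hc1 (le_of_lt ht)) htail
  rw [integral_one_sub_one_sub_mul_exp_neg_pow_pow L c hm0, ← hsum] at hmain
  refine ⟨hmain, le_trans ?_ hmain⟩
  calc (log L + log c) / m = 1 / m * (log L + log c) := by ring
    _ ≤ _ := by
      rw [hsum]
      gcongr
      exact log_add_log_le_sum_range_choose L hc0 hc1

/-- Expectation lower bound from a CDF bound: if Pr{X ≤ x} ≥ 1 − (1 − c xᵐ)ᴸ on
[0, c^{−1/m}] for a (0,1]-valued random variable X, then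
E[−log X] ≥ (1/m) ∑_{k=1}^{L} C(L,k)(−1)^{k+1} cᵏ/k ≥ (log L + log c)/m. -/
theorem stmt_6 {Ω : Type*} [MeasurableSpace Ω] (μ : Measure Ω) [IsProbabilityMeasure μ]
    (X : Ω → ℝ) (hX : Measurable X)
    (hrange : ∀ᵐ ω ∂μ, 0 < X ω ∧ X ω ≤ 1)
    (c : ℝ) (hc0 : 0 < c) (hc1 : c ≤ 1) (m L : ℕ) (hm : 1 ≤ m) (hL : 1 ≤ L)
    (hcdf : ∀ x : ℝ, x ∈ Set.Icc 0 (c ^ (-(1 : ℝ) / m)) →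
      1 - (1 - c * x ^ m) ^ L ≤ (μ {ω | X ω ≤ x}).toReal)
    (hint : Integrable (fun ω => -Real.log (X ω)) μ) :
    (1 / (m : ℝ)) * ∑ k ∈ Finset.Icc 1 L, (L.choose k : ℝ) * (-1) ^ (k + 1) * c ^ k / k
        ≤ ∫ ω, -Real.log (X ω) ∂μ ∧
    (Real.log L + Real.log c) / m ≤ ∫ ω, -Real.log (X ω) ∂μ :=
  stmt_6_general μ X hrange c hc0 hc1 m L hm hcdf hint
end

section
/- Let K ≥ 4 and let α be a K×K matrix of nonnegative reals with entries α_ℓ^{(j)}. For an assignment S = (n_1,…,n_K) ∈ {1,…,K}^K, define D(S) = ∑_{k=1}^{K} min over i ≠ k of ( min over pairs (ℓ,j) with ℓ ≠ i and j ≠ n_i of α_ℓ^{(j)} ). Then D(S) is maximized by choosing all n_i equal to a common index n*, where n* is a column attaining argmin over j of min over ℓ of α_ℓ^{(j)}, and the maximal value is K · min over all pairs (i,j) with j ≠ n* of α_i^{(j)}. -/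
/-- The AP-ZF DoF with passive-TX assignment S: D(S) = ∑_k min_{i ≠ k} min_{(ℓ,j): ℓ ≠ i, j ≠ n_i} α_ℓ^{(j)}. -/
noncomputable def apzfDoF (K : ℕ) (α : Fin K → Fin K → ℝ) (S : Fin K → Fin K) : ℝ :=
  ∑ k : Fin K, ⨅ i : {i : Fin K // i ≠ k},
    ⨅ p : {p : Fin K × Fin K // p.1 ≠ (i : Fin K) ∧ p.2 ≠ S (i : Fin K)},
      α (p : Fin K × Fin K).1 (p : Fin K × Fin K).2

section Aux

variable {K : ℕ} (α : Fin K → Fin K → ℝ)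

/-- inner infimum -/
noncomputable def apzfB (S : Fin K → Fin K) (i : Fin K) : ℝ :=
  ⨅ p : {p : Fin K × Fin K // p.1 ≠ i ∧ p.2 ≠ S i},
    α (p : Fin K × Fin K).1 (p : Fin K × Fin K).2

lemma apzf_term (S : Fin K → Fin K) (k : Fin K) :
    (⨅ i : {i : Fin K // i ≠ k},
      ⨅ p : {p : Fin K × Fin K // p.1 ≠ (i : Fin K) ∧ p.2 ≠ S (i : Fin K)},
        α (p : Fin K × Fin K).1 (p : Fin K × Fin K).2)
      = ⨅ i : {i : Fin K // i ≠ k}, apzfB α S (i : Fin K) := rfl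

end Aux

/-- For K ≥ 4, D(S) is maximized by choosing all passive indices equal to a column n*
attaining argmin_j min_ℓ α_ℓ^{(j)}, and the maximal value is K · min_{(i,j), j ≠ n*} α_i^{(j)}. -/
theorem stmt_9 (K : ℕ) (hK : 4 ≤ K) (α : Fin K → Fin K → ℝ)
    (hα : ∀ i j, 0 ≤ α i j) (nstar : Fin K)
    (hstar : ∀ j : Fin K, (⨅ ℓ : Fin K, α ℓ nstar) ≤ ⨅ ℓ : Fin K, α ℓ j) :
    (∀ S : Fin K → Fin K, apzfDoF K α S ≤ apzfDoF K α (fun _ => nstar)) ∧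
      apzfDoF K α (fun _ => nstar)
        = K * ⨅ p : {p : Fin K × Fin K // p.2 ≠ nstar}, α (p : Fin K × Fin K).1 (p : Fin K × Fin K).2 := by
  haveI hnt : Nontrivial (Fin K) := Fin.nontrivial_iff_two_le.mpr (by omega)
  -- existence of elements distinct from up to three given ones
  have hex3 : ∀ a b c : Fin K, ∃ i : Fin K, i ≠ a ∧ i ≠ b ∧ i ≠ c := by
    intro a b c
    by_contra h
    push_neg at h
    have hsub : (Finset.univ : Finset (Fin K)) ⊆ {a, b, c} := by
      intro i _
      by_cases h1 : i = a
      · simp [h1]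
      by_cases h2 : i = b
      · simp [h2]
      · simp [h i h1 h2]
    have hc := Finset.card_le_card hsub
    have h3 : ({a, b, c} : Finset (Fin K)).card ≤ 3 := by
      apply le_trans (Finset.card_insert_le _ _)
      have := Finset.card_insert_le b ({c} : Finset (Fin K))
      simp at this ⊢
      omega
    simp [Finset.card_univ] at hc
    omega
  have hex2 : ∀ a b : Fin K, ∃ i : Fin K, i ≠ a ∧ i ≠ b := by
    intro a b
    obtain ⟨i, h1, h2, _⟩ := hex3 a b b
    exact ⟨i, h1, h2⟩
  -- Nonempty instances
  haveI I1 : ∀ k : Fin K, Nonempty {i : Fin K // i ≠ k} := fun k => ⟨⟨(exists_ne k).choose, (exists_ne k).choose_spec⟩⟩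
  haveI I2 : ∀ (c i : Fin K), Nonempty {p : Fin K × Fin K // p.1 ≠ i ∧ p.2 ≠ c} := by
    intro c i
    obtain ⟨l, hl⟩ := exists_ne i
    obtain ⟨j, hj⟩ := exists_ne c
    exact ⟨⟨(l, j), hl, hj⟩⟩
  haveI I3 : Nonempty {p : Fin K × Fin K // p.2 ≠ nstar} := by
    obtain ⟨j, hj⟩ := exists_ne nstar
    exact ⟨⟨(nstar, j), hj⟩⟩
  -- bddBelow facts
  have bddB : ∀ (S : Fin K → Fin K) (i : Fin K),
      BddBelow (Set.range fun p : {p : Fin K × Fin K // p.1 ≠ i ∧ p.2 ≠ S i} =>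
        α (p : Fin K × Fin K).1 (p : Fin K × Fin K).2) := by
    intro S i
    refine ⟨0, ?_⟩
    rintro x ⟨p, rfl⟩
    exact hα _ _
  have hB_nonneg : ∀ (S : Fin K → Fin K) (i : Fin K), 0 ≤ apzfB α S i := by
    intro S i
    exact le_ciInf fun p => hα _ _
  have bddOuter : ∀ (S : Fin K → Fin K) (k : Fin K),
      BddBelow (Set.range fun i : {i : Fin K // i ≠ k} => apzfB α S (i : Fin K)) := by
    intro S k
    refine ⟨0, ?_⟩
    rintro x ⟨i, rfl⟩
    exact hB_nonneg S i
  have bddM : BddBelow (Set.range fun p : {p : Fin K × Fin K // p.2 ≠ nstar} =>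
      α (p : Fin K × Fin K).1 (p : Fin K × Fin K).2) := by
    refine ⟨0, ?_⟩
    rintro x ⟨p, rfl⟩
    exact hα _ _
  have bddCol : ∀ j : Fin K, BddBelow (Set.range fun ℓ : Fin K => α ℓ j) := by
    intro j
    exact ⟨0, by rintro x ⟨l, rfl⟩; exact hα _ _⟩
  set M : ℝ := ⨅ p : {p : Fin K × Fin K // p.2 ≠ nstar},
    α (p : Fin K × Fin K).1 (p : Fin K × Fin K).2 with hM
  -- B ≤ single entries
  have hB_le : ∀ (S : Fin K → Fin K) (i l j : Fin K), l ≠ i → j ≠ S i →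
      apzfB α S i ≤ α l j := by
    intro S i l j hl hj
    exact ciInf_le (bddB S i) ⟨(l, j), hl, hj⟩
  -- minimizer of M
  obtain ⟨⟨⟨l0, j0⟩, hj0⟩, hmin⟩ :=
    Finite.exists_min (fun p : {p : Fin K × Fin K // p.2 ≠ nstar} =>
      α (p : Fin K × Fin K).1 (p : Fin K × Fin K).2)
  have hM0 : M = α l0 j0 := by
    refine le_antisymm (ciInf_le bddM ⟨(l0, j0), hj0⟩) (le_ciInf fun p => hmin p)
  -- minimizer of column nstar
  obtain ⟨lstar, hlstar⟩ := Finite.exists_min (fun ℓ : Fin K => α ℓ nstar)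
  have hm_le_M : α lstar nstar ≤ M := by
    have h1 : α lstar nstar ≤ ⨅ ℓ : Fin K, α ℓ nstar := le_ciInf hlstar
    have h2 : (⨅ ℓ : Fin K, α ℓ j0) ≤ α l0 j0 := ciInf_le (bddCol j0) l0
    rw [hM0]
    exact h1.trans ((hstar j0).trans h2)
  -- Key: each term is ≤ M for every S
  have hterm_le : ∀ (S : Fin K → Fin K) (k : Fin K),
      (⨅ i : {i : Fin K // i ≠ k}, apzfB α S (i : Fin K)) ≤ M := by
    intro S k
    by_cases hcase : ∃ i : Fin K, i ≠ k ∧ i ≠ l0 ∧ S i = nstar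
    · obtain ⟨i, hik, hil0, hSi⟩ := hcase
      have h1 : (⨅ i : {i : Fin K // i ≠ k}, apzfB α S (i : Fin K)) ≤ apzfB α S i :=
        ciInf_le (bddOuter S k) ⟨i, hik⟩
      have h2 : apzfB α S i ≤ α l0 j0 := by
        apply hB_le S i l0 j0 (fun h => hil0 h.symm)
        rw [hSi]; exact hj0
      rw [hM0]; exact h1.trans h2
    · push_neg at hcase
      obtain ⟨i, hik, hil0, hils⟩ := hex3 k l0 lstar
      have hSi : S i ≠ nstar := hcase i hik hil0
      have h1 : (⨅ i : {i : Fin K // i ≠ k}, apzfB α S (i : Fin K)) ≤ apzfB α S i :=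
        ciInf_le (bddOuter S k) ⟨i, hik⟩
      have h2 : apzfB α S i ≤ α lstar nstar :=
        hB_le S i lstar nstar (fun h => hils h.symm) (fun h => hSi h.symm)
      exact h1.trans (h2.trans hm_le_M)
  -- each term equals M for the constant assignment
  have hterm_eq : ∀ k : Fin K,
      (⨅ i : {i : Fin K // i ≠ k}, apzfB α (fun _ => nstar) (i : Fin K)) = M := by
    intro k
    refine le_antisymm (hterm_le _ k) ?_
    refine le_ciInf fun i => ?_
    refine le_ciInf ?_
    rintro ⟨⟨l, j⟩, hl, hj⟩
    exact ciInf_le bddM ⟨(l, j), hj⟩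
  constructor
  · intro S
    unfold apzfDoF
    refine Finset.sum_le_sum fun k _ => ?_
    rw [apzf_term α S k, apzf_term α (fun _ => nstar) k, hterm_eq k]
    exact hterm_le S k
  · unfold apzfDoF
    have : ∀ k ∈ Finset.univ, (⨅ i : {i : Fin K // i ≠ k},
        ⨅ p : {p : Fin K × Fin K // p.1 ≠ (i : Fin K) ∧ p.2 ≠ nstar},
          α (p : Fin K × Fin K).1 (p : Fin K × Fin K).2) = M := by
      intro k _
      exact hterm_eq k
    rw [Finset.sum_congr rfl this, Finset.sum_const, Finset.card_univ, Fintype.card_fin,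
      nsmul_eq_mul]
end

section
/- Define g(n, γ) = n·min(1, γ/(n²(n−1))) for integers n ≥ 2 and g(1, γ) = 1 for γ ≥ 0. Then for γ ∈ [n²(n−1), (n+1)n²], the maximum of g(m, γ) over m ∈ {1,…,K} (for any K ≥ n+1) is attained at m = n and equals n; and for γ ∈ [n(n−1)², n²(n−1)], the maximum is attained at m = n and equals γ/(n(n−1)). -/
/-- Sum DoF of conventional ZF serving n users with total feedback scaling γ shared equally. -/
noncomputable def sumDoF (n : ℕ) (γ : ℝ) : ℝ :=
  if n = 1 then 1 else n * min 1 (γ / (n ^ 2 * ((n : ℝ) - 1)))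

/-! Two bounds do all the work: `g(m, γ) ≤ m`, which handles every `m` below `n`, and
`g(m, γ) ≤ γ / (m (m - 1))` for `m ≥ 2`, which decreases in `m` and handles every `m` above `n`.
The ends of the two ranges of `γ` are exactly where these meet `g(n, γ)`: `γ ≤ (n + 1) n²` gives
`γ / ((n + 1) n) ≤ n`, and `γ ≥ n (n - 1)²` gives `γ / (n (n - 1)) ≥ n - 1`. -/

lemma sumDoF_le_self (m : ℕ) (γ : ℝ) : sumDoF m γ ≤ m := by
  unfold sumDoF
  split_ifs with h
  · simp [h]
  · exact mul_le_of_le_one_right (Nat.cast_nonneg m) (min_le_left _ _)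

lemma sumDoF_le_div {m : ℕ} (hm : 2 ≤ m) (γ : ℝ) :
    sumDoF m γ ≤ γ / (m * ((m : ℝ) - 1)) := by
  have hm' : (2 : ℝ) ≤ m := by exact_mod_cast hm
  rw [sumDoF, if_neg (by omega)]
  calc (m : ℝ) * min 1 (γ / ((m : ℝ) ^ 2 * ((m : ℝ) - 1)))
      ≤ m * (γ / ((m : ℝ) ^ 2 * ((m : ℝ) - 1))) := by gcongr; exact min_le_right _ _
    _ = γ / (m * ((m : ℝ) - 1)) := by
      have : (m : ℝ) - 1 ≠ 0 := by linarith
      field_simp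

lemma sumDoF_eq_self {n : ℕ} (hn : 2 ≤ n) {γ : ℝ} (hγ : (n : ℝ) ^ 2 * ((n : ℝ) - 1) ≤ γ) :
    sumDoF n γ = n := by
  have hn' : (2 : ℝ) ≤ n := by exact_mod_cast hn
  have hpos : (0 : ℝ) < (n : ℝ) ^ 2 * ((n : ℝ) - 1) := by
    have : (0 : ℝ) < n - 1 := by linarith
    positivity
  rw [sumDoF, if_neg (by omega), min_eq_left ((one_le_div hpos).mpr hγ), mul_one]

lemma sumDoF_eq_div {n : ℕ} (hn : 2 ≤ n) {γ : ℝ} (hγ : γ ≤ (n : ℝ) ^ 2 * ((n : ℝ) - 1)) :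
    sumDoF n γ = γ / (n * ((n : ℝ) - 1)) := by
  have hn' : (2 : ℝ) ≤ n := by exact_mod_cast hn
  have hpos : (0 : ℝ) < (n : ℝ) ^ 2 * ((n : ℝ) - 1) := by
    have : (0 : ℝ) < n - 1 := by linarith
    positivity
  rw [sumDoF, if_neg (by omega), min_eq_right ((div_le_one hpos).mpr hγ)]
  have : (n : ℝ) - 1 ≠ 0 := by linarith
  field_simp

lemma sumDoF_le_of_le_succ_mul_sq {n : ℕ} (hn : 1 ≤ n) {γ : ℝ}
    (hγ : γ ≤ ((n : ℝ) + 1) * n ^ 2) (m : ℕ) : sumDoF m γ ≤ n := by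
  rcases le_or_gt m n with hmn | hnm
  · exact (sumDoF_le_self m γ).trans (by exact_mod_cast hmn)
  · have hn' : (1 : ℝ) ≤ n := by exact_mod_cast hn
    have hnm' : (n : ℝ) + 1 ≤ m := by exact_mod_cast hnm
    have hpos : (0 : ℝ) < m * ((m : ℝ) - 1) := by nlinarith
    calc sumDoF m γ ≤ γ / (m * ((m : ℝ) - 1)) := sumDoF_le_div (by omega) γ
      _ ≤ n := by
        rw [div_le_iff₀ hpos]
        nlinarith [mul_nonneg (sub_nonneg.mpr hnm') (by positivity : (0 : ℝ) ≤ m + n)]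

lemma sumDoF_le_div_of_mul_sq_le {n : ℕ} (hn : 2 ≤ n) {γ : ℝ}
    (hγ : (n : ℝ) * ((n : ℝ) - 1) ^ 2 ≤ γ) (m : ℕ) :
    sumDoF m γ ≤ γ / (n * ((n : ℝ) - 1)) := by
  have hn' : (2 : ℝ) ≤ n := by exact_mod_cast hn
  have hpos : (0 : ℝ) < n * ((n : ℝ) - 1) := by nlinarith
  rcases lt_or_ge m n with hmn | hnm
  · have hmn' : (m : ℝ) ≤ n - 1 := by
      rw [le_sub_iff_add_le]; exact_mod_cast hmn
    calc sumDoF m γ ≤ m := sumDoF_le_self m γ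
      _ ≤ n - 1 := hmn'
      _ ≤ γ / (n * ((n : ℝ) - 1)) := by rw [le_div_iff₀ hpos]; nlinarith
  · have hnm' : (n : ℝ) ≤ m := by exact_mod_cast hnm
    calc sumDoF m γ ≤ γ / (m * ((m : ℝ) - 1)) := sumDoF_le_div (hn.trans hnm) γ
      _ ≤ γ / (n * ((n : ℝ) - 1)) := by
        gcongr
        · nlinarith
        · linarith

theorem stmt_12_general (n K : ℕ) (hn : 2 ≤ n) :
    ((∀ γ : ℝ, γ ∈ Set.Icc ((n : ℝ) ^ 2 * (n - 1)) (((n : ℝ) + 1) * n ^ 2) →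
        (∀ m ∈ Finset.Icc 1 K, sumDoF m γ ≤ sumDoF n γ) ∧ sumDoF n γ = n)) ∧
    ((∀ γ : ℝ, γ ∈ Set.Icc ((n : ℝ) * (n - 1) ^ 2) ((n : ℝ) ^ 2 * (n - 1)) →
        (∀ m ∈ Finset.Icc 1 K, sumDoF m γ ≤ sumDoF n γ) ∧
          sumDoF n γ = γ / (n * ((n : ℝ) - 1)))) := by
  refine ⟨fun γ ⟨hlo, hhi⟩ => ?_, fun γ ⟨hlo, hhi⟩ => ?_⟩
  · have hval := sumDoF_eq_self hn hlo
    exact ⟨fun m _ => hval ▸ sumDoF_le_of_le_succ_mul_sq (by omega) hhi m, hval⟩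
  · have hval := sumDoF_eq_div hn hhi
    exact ⟨fun m _ => hval ▸ sumDoF_le_div_of_mul_sq_le hn hlo m, hval⟩

/-- DoF-optimal number of served users: for γ ∈ [n²(n−1), (n+1)n²] the maximum of
g(m,γ) over m ∈ {1,…,K} is attained at m = n with value n; for γ ∈ [n(n−1)², n²(n−1)]
it is attained at m = n with value γ/(n(n−1)). -/
theorem stmt_12 (n K : ℕ) (hn : 2 ≤ n) (hK : n + 1 ≤ K) :
    ((∀ γ : ℝ, γ ∈ Set.Icc ((n : ℝ) ^ 2 * (n - 1)) (((n : ℝ) + 1) * n ^ 2) →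
        (∀ m ∈ Finset.Icc 1 K, sumDoF m γ ≤ sumDoF n γ) ∧ sumDoF n γ = n)) ∧
    ((∀ γ : ℝ, γ ∈ Set.Icc ((n : ℝ) * (n - 1) ^ 2) ((n : ℝ) ^ 2 * (n - 1)) →
        (∀ m ∈ Finset.Icc 1 K, sumDoF m γ ≤ sumDoF n γ) ∧
          sumDoF n γ = γ / (n * ((n : ℝ) - 1)))) :=
  stmt_12_general n K hn
end

section
/- Let K ≥ 2, c = Γ(K−1/2)/(Γ(K)Γ(1/2)), and let Y_1,…,Y_L be i.i.d. random variables in (0,1] with Pr{min_k Y_k ≤ y} ≥ 1 − (1 − c y^{K−1})^L for y ∈ [0, c^{−1/(K−1)}]. Then E[−log₂ (min_k Y_k)] ≥ (log₂ L + log₂ c)/(K−1). -/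
open MeasureTheory ProbabilityTheory
open Finset Real Filter Topology



-- antiderivative
lemma aux_deriv (a c : ℝ) (ha : a ≠ 0) (L : ℕ) (t : ℝ) :
    HasDerivAt (fun t => (∑ j ∈ Finset.range L,
        (1 - c * Real.exp (-(a*t)))^(j+1)/((j:ℝ)+1)) / a)
      (1 - (1 - c * Real.exp (-(a*t)))^L) t := by
  have hinner : HasDerivAt (fun t : ℝ => 1 - c * Real.exp (-(a*t)))
      (a * c * Real.exp (-(a*t))) t := by
    have h0 : HasDerivAt (fun t : ℝ => -(a*t)) (-a) t := by
      simpa using (hasDerivAt_id t).const_mul (-a)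
    have h1 := ((h0.exp).const_mul c).const_sub 1
    refine h1.congr_deriv ?_
    ring
  have hsum : HasDerivAt (fun t => ∑ j ∈ Finset.range L,
      (1 - c * Real.exp (-(a*t)))^(j+1)/((j:ℝ)+1))
      (∑ j ∈ Finset.range L,
        (1 - c * Real.exp (-(a*t)))^j * (a * c * Real.exp (-(a*t)))) t := by
    have := HasDerivAt.fun_sum (u := Finset.range L)
      (A := fun j t => (1 - c * Real.exp (-(a*t)))^(j+1)/((j:ℝ)+1))
      (A' := fun j => (1 - c * Real.exp (-(a*t)))^j * (a * c * Real.exp (-(a*t))))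
      (fun j _ => by
        have h2 := (hinner.pow (j+1)).div_const ((j:ℝ)+1)
        refine h2.congr_deriv ?_
        have : ((j:ℝ)+1) ≠ 0 := by positivity
        rw [Nat.add_sub_cancel]; push_cast
        field_simp)
    exact this
  have h3 := hsum.div_const a
  refine h3.congr_deriv ?_
  rw [← Finset.sum_mul]
  have hg := geom_sum_mul (1 - c * Real.exp (-(a*t))) L
  field_simp
  linear_combination -hg

lemma aux_integral (a c : ℝ) (ha : a ≠ 0) (L : ℕ) (T : ℝ) (hT : 0 ≤ T) :
    ∫ t in Set.Ioc (0:ℝ) T, (1 - (1 - c * Real.exp (-(a*t)))^L)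
      = (∑ j ∈ Finset.range L, (1 - c * Real.exp (-(a*T)))^(j+1)/((j:ℝ)+1)) / a
        - (∑ j ∈ Finset.range L, (1 - c)^(j+1)/((j:ℝ)+1)) / a := by
  have hcont : Continuous (fun t : ℝ => 1 - (1 - c * Real.exp (-(a*t)))^L) := by
    continuity
  have h := intervalIntegral.integral_eq_sub_of_hasDerivAt
    (f := fun t => (∑ j ∈ Finset.range L,
        (1 - c * Real.exp (-(a*t)))^(j+1)/((j:ℝ)+1)) / a)
    (fun t _ => aux_deriv a c ha L t)
    (hcont.intervalIntegrable 0 T)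
  rw [← intervalIntegral.integral_of_le hT, h]
  norm_num

lemma aux_tendsto (a c : ℝ) (ha : 0 < a) (L : ℕ) :
    Filter.Tendsto (fun T => (∑ j ∈ Finset.range L,
        (1 - c * Real.exp (-(a*T)))^(j+1)/((j:ℝ)+1)) / a
        - (∑ j ∈ Finset.range L, (1 - c)^(j+1)/((j:ℝ)+1)) / a)
      Filter.atTop
      (𝓝 ((∑ j ∈ Finset.range L, (1 - (1-c)^(j+1))/((j:ℝ)+1)) / a)) := by
  have hm : Filter.Tendsto (fun T : ℝ => a * T) Filter.atTop Filter.atTop :=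
    Filter.tendsto_id.const_mul_atTop ha
  have he : Filter.Tendsto (fun T : ℝ => Real.exp (-(a*T))) Filter.atTop (𝓝 0) := by
    exact Real.tendsto_exp_atBot.comp (tendsto_neg_atTop_atBot.comp hm)
  have hQ : Continuous (fun x : ℝ =>
      (∑ j ∈ Finset.range L, (1 - c*x)^(j+1)/((j:ℝ)+1))/a) := by continuity
  have h2 := ((hQ.tendsto 0).comp he).sub_const
    ((∑ j ∈ Finset.range L, (1-c)^(j+1)/((j:ℝ)+1))/a)
  convert h2 using 1
  simp only [Function.comp, mul_zero, sub_zero]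
  rw [div_sub_div_same, ← Finset.sum_sub_distrib]
  congr 2
  refine Finset.sum_congr rfl fun j _ => ?_
  rw [← sub_div]
  simp

lemma aux_sum (c : ℝ) (hc0 : 0 < c) (hc1 : c ≤ 1) (L : ℕ) (hL : 1 ≤ L) :
    Real.log L + Real.log c ≤ ∑ j ∈ Finset.range L, (1 - (1-c)^(j+1))/((j:ℝ)+1) := by
  have hsplit : ∑ j ∈ Finset.range L, (1 - (1-c)^(j+1))/((j:ℝ)+1)
      = (∑ j ∈ Finset.range L, (1:ℝ)/((j:ℝ)+1))
        - ∑ j ∈ Finset.range L, (1-c)^(j+1)/((j:ℝ)+1) := by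
    rw [← Finset.sum_sub_distrib]
    exact Finset.sum_congr rfl fun j _ => by rw [← sub_div]
  have h1 : Real.log L ≤ ∑ j ∈ Finset.range L, (1:ℝ)/((j:ℝ)+1) := by
    have := log_add_one_le_harmonic L
    have hcast : ((harmonic L : ℚ) : ℝ) = ∑ j ∈ Finset.range L, (1:ℝ)/((j:ℝ)+1) := by
      rw [harmonic]
      push_cast
      simp [one_div]
    have hlog : Real.log L ≤ Real.log (L + 1) :=
      Real.log_le_log (by exact_mod_cast hL) (by push_cast; linarith)
    calc Real.log L ≤ Real.log (L+1) := hlog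
      _ ≤ (harmonic L : ℝ) := by exact_mod_cast this
      _ = _ := hcast
  have habs : |1 - c| < 1 := by rw [abs_lt]; constructor <;> linarith
  have hs := Real.hasSum_pow_div_log_of_abs_lt_one habs
  have h2 : ∑ j ∈ Finset.range L, (1-c)^(j+1)/((j:ℝ)+1) ≤ -Real.log (1 - (1-c)) := by
    have := sum_le_hasSum (Finset.range L) (fun i _ => div_nonneg (pow_nonneg (by linarith) _) (by positivity)) hs
    convert this using 2 <;> push_cast <;> ring_nf
  rw [show (1 : ℝ) - (1-c) = c by ring] at h2
  rw [hsplit]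
  linarith

lemma aux_c (K : ℕ) (hK : 2 ≤ K) :
    0 < Real.Gamma ((K:ℝ) - 1/2) / (Real.Gamma K * Real.Gamma (1/2)) ∧
    Real.Gamma ((K:ℝ) - 1/2) / (Real.Gamma K * Real.Gamma (1/2)) ≤ 1 := by
  have hK2 : (2:ℝ) ≤ (K:ℝ) := by exact_mod_cast hK
  have hp1 : 0 < Real.Gamma ((K:ℝ) - 1/2) := Real.Gamma_pos_of_pos (by linarith)
  have hp2 : 0 < Real.Gamma (K:ℝ) := Real.Gamma_pos_of_pos (by linarith)
  have hp3 : 0 < Real.Gamma (1/2 : ℝ) := Real.Gamma_pos_of_pos (by norm_num)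
  have hp4 : 0 < Real.Gamma ((K:ℝ) - 1) := Real.Gamma_pos_of_pos (by linarith)
  refine ⟨div_pos hp1 (mul_pos hp2 hp3), ?_⟩
  rw [div_le_one (mul_pos hp2 hp3)]
  have hconv := Real.convexOn_Gamma.2 (x := (K:ℝ)-1) (y := (K:ℝ))
    (by simp only [Set.mem_Ioi]; linarith) (by simp only [Set.mem_Ioi]; linarith)
    (by norm_num : (0:ℝ) ≤ 1/2) (by norm_num : (0:ℝ) ≤ 1/2) (by norm_num)
  have heq : (1/2 : ℝ) • ((K:ℝ)-1) + (1/2 : ℝ) • (K:ℝ) = (K:ℝ) - 1/2 := by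
    simp [smul_eq_mul]; ring
  rw [heq] at hconv
  have hrec : Real.Gamma (K:ℝ) = ((K:ℝ)-1) * Real.Gamma ((K:ℝ)-1) := by
    have := Real.Gamma_add_one (s := (K:ℝ)-1) (by intro h; nlinarith [h])
    rw [show (K:ℝ)-1+1 = (K:ℝ) by ring] at this
    exact this
  have hmono : Real.Gamma ((K:ℝ)-1) ≤ Real.Gamma (K:ℝ) := by nlinarith
  have hhalf : (1:ℝ) ≤ Real.Gamma (1/2 : ℝ) := by
    rw [Real.Gamma_one_half_eq]
    rw [show (1:ℝ) = Real.sqrt 1 by simp]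
    exact Real.sqrt_le_sqrt (by linarith [Real.pi_gt_three])
  have : Real.Gamma ((K:ℝ) - 1/2) ≤ Real.Gamma (K:ℝ) := by
    simp only [smul_eq_mul] at hconv
    nlinarith
  nlinarith

/-- Distortion lower bound for random vector quantization: if the minimum of the L samples
satisfies Pr{min_k Y_k ≤ y} ≥ 1 − (1 − c y^{K−1})^L on [0, c^{−1/(K−1)}], with
c = Γ(K−1/2)/(Γ(K)Γ(1/2)), then E[−log₂(min_k Y_k)] ≥ (log₂ L + log₂ c)/(K−1). -/
theorem stmt_18 {Ω : Type*} [MeasurableSpace Ω] (μ : Measure Ω) [IsProbabilityMeasure μ]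
    (K L : ℕ) (hK : 2 ≤ K) (hL : 1 ≤ L)
    (c : ℝ) (hc : c = Real.Gamma ((K : ℝ) - 1 / 2) / (Real.Gamma K * Real.Gamma (1 / 2)))
    (Y : Fin L → Ω → ℝ) (hmeas : ∀ k, Measurable (Y k))
    (hrange : ∀ k, ∀ᵐ ω ∂μ, 0 < Y k ω ∧ Y k ω ≤ 1)
    (hindep : iIndepFun Y μ)
    (hident : ∀ k k' : Fin L, IdentDistrib (Y k) (Y k') μ μ)
    (hmin : ∀ y ∈ Set.Icc (0 : ℝ) (c ^ (-(1 : ℝ) / ((K : ℝ) - 1))),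
      1 - (1 - c * y ^ (K - 1)) ^ L ≤ (μ {ω | (⨅ k, Y k ω) ≤ y}).toReal)
    (hint : Integrable (fun ω => -Real.logb 2 (⨅ k, Y k ω)) μ) :
    (Real.logb 2 L + Real.logb 2 c) / ((K : ℝ) - 1)
      ≤ ∫ ω, -Real.logb 2 (⨅ k, Y k ω) ∂μ := by
  classical
  have hc01 := aux_c K hK
  rw [← hc] at hc01
  obtain ⟨hc0, hc1⟩ := hc01
  haveI : Nonempty (Fin L) := Fin.pos_iff_nonempty.mp hL
  have hK1 : (1:ℝ) ≤ (K:ℝ) := by exact_mod_cast le_trans one_le_two hK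
  have hK2 : (2:ℝ) ≤ (K:ℝ) := by exact_mod_cast hK
  set m : ℕ := K - 1 with hm
  have hmcast : (m:ℝ) = (K:ℝ) - 1 := by
    have h1K : 1 ≤ K := le_trans one_le_two hK
    rw [hm, Nat.cast_sub h1K]; norm_num
  set a : ℝ := ((K:ℝ) - 1) * Real.log 2 with ha_def
  have hlog2 : (0:ℝ) < Real.log 2 := Real.log_pos (by norm_num)
  have ha : 0 < a := by
    apply mul_pos (by linarith) hlog2
  set X : Ω → ℝ := fun ω => ⨅ k, Y k ω with hX
  set Z : Ω → ℝ := fun ω => -Real.logb 2 (X ω) with hZ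
  -- a.e. range of X
  have hXae : ∀ᵐ ω ∂μ, 0 < X ω ∧ X ω ≤ 1 := by
    have hall : ∀ᵐ ω ∂μ, ∀ k, 0 < Y k ω ∧ Y k ω ≤ 1 := (MeasureTheory.ae_all_iff).2 hrange
    filter_upwards [hall] with ω hω
    obtain ⟨i, hi⟩ := exists_eq_ciInf_of_finite (f := fun k => Y k ω)
    constructor
    · rw [hX]; simp only; rw [← hi]; exact (hω i).1
    · rw [hX]; simp only; rw [← hi]; exact (hω i).2
  have hZnn : 0 ≤ᵐ[μ] Z := by
    filter_upwards [hXae] with ω hω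
    exact neg_nonneg.mpr (Real.logb_nonpos (b := 2) (by norm_num) hω.1.le hω.2)
  have key := hint.integral_eq_integral_meas_le hZnn
  set g : ℝ → ℝ := fun t => (μ {ω' | t ≤ Z ω'}).toReal with hgdef
  have g_anti : Antitone g := fun s t hst =>
    ENNReal.toReal_mono (measure_ne_top μ _) (measure_mono fun ω h => le_trans hst h)
  have g_meas : Measurable g := g_anti.measurable
  have g_int : IntegrableOn g (Set.Ioi 0) := by
    refine ⟨g_meas.aestronglyMeasurable, ?_⟩
    rw [hasFiniteIntegral_iff_ofReal
      (Filter.Eventually.of_forall fun t => ENNReal.toReal_nonneg)]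
    have heq : ∀ t, ENNReal.ofReal (g t) = μ {ω' | t ≤ Z ω'} :=
      fun t => ENNReal.ofReal_toReal (measure_ne_top μ _)
    calc ∫⁻ t in Set.Ioi 0, ENNReal.ofReal (g t)
        = ∫⁻ t in Set.Ioi 0, μ {ω' | t ≤ Z ω'} := lintegral_congr heq
      _ = ∫⁻ t in Set.Ioi 0, μ {ω' | t < Z ω'} :=
          lintegral_congr_ae (meas_le_ae_eq_meas_lt μ (volume.restrict (Set.Ioi 0)) Z)
      _ = ∫⁻ ω, ENNReal.ofReal (Z ω) ∂μ :=
          (lintegral_eq_lintegral_meas_lt μ hZnn hint.aemeasurable).symm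
      _ < ⊤ := hint.lintegral_lt_top
  have hFg : ∀ t, 0 < t → 1 - (1 - c * Real.exp (-(a*t)))^L ≤ g t := by
    intro t ht
    set y : ℝ := Real.exp (-(t * Real.log 2)) with hy
    have hy0 : 0 < y := Real.exp_pos _
    have hy1 : y ≤ 1 := Real.exp_le_one_iff.2 (by nlinarith)
    have hmem : y ∈ Set.Icc (0:ℝ) (c ^ (-(1:ℝ) / ((K:ℝ) - 1))) := by
      refine ⟨hy0.le, le_trans hy1 ?_⟩
      apply Real.one_le_rpow_of_pos_of_le_one_of_nonpos hc0 hc1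
      apply div_nonpos_of_nonpos_of_nonneg (by norm_num) (by linarith)
    have happ := hmin y hmem
    have hpow : y ^ m = Real.exp (-(a * t)) := by
      rw [hy, ← Real.exp_nat_mul]
      congr 1
      rw [ha_def, ← hmcast]; ring
    rw [hpow] at happ
    refine le_trans happ (ENNReal.toReal_mono (measure_ne_top μ _) ?_)
    apply measure_mono_ae
    filter_upwards [hXae] with ω hω hle
    have hlogb : Real.logb 2 (X ω) ≤ -t := by
      rw [Real.logb_le_iff_le_rpow (by norm_num) hω.1]
      calc X ω ≤ y := hle
        _ = (2:ℝ) ^ (-t) := by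
            rw [Real.rpow_def_of_pos (by norm_num : (0:ℝ) < 2), hy]
            congr 1; ring
    show t ≤ Z ω
    rw [hZ]
    simp only
    linarith
  have hchain : ∀ T : ℝ, 0 ≤ T →
      (∑ j ∈ Finset.range L, (1 - c * Real.exp (-(a*T)))^(j+1)/((j:ℝ)+1)) / a
        - (∑ j ∈ Finset.range L, (1 - c)^(j+1)/((j:ℝ)+1)) / a
      ≤ ∫ t in Set.Ioi 0, g t := by
    intro T hT
    rw [← aux_integral a c ha.ne' L T hT]
    have hFcont : Continuous (fun t : ℝ => 1 - (1 - c * Real.exp (-(a*t)))^L) := by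
      fun_prop
    calc ∫ t in Set.Ioc 0 T, (1 - (1 - c * Real.exp (-(a*t)))^L)
        ≤ ∫ t in Set.Ioc 0 T, g t := by
          apply setIntegral_mono_on (hFcont.integrableOn_Ioc)
            (g_int.mono_set Set.Ioc_subset_Ioi_self) measurableSet_Ioc
          intro t ht
          exact hFg t ht.1
      _ ≤ ∫ t in Set.Ioi 0, g t :=
          setIntegral_mono_set g_int
            (Filter.Eventually.of_forall fun t => ENNReal.toReal_nonneg)
            (HasSubset.Subset.eventuallyLE Set.Ioc_subset_Ioi_self)
  have hS := le_of_tendsto (aux_tendsto a c ha L)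
    (Filter.eventually_atTop.2 ⟨0, fun T hT => hchain T hT⟩)
  rw [key]
  refine le_trans ?_ hS
  have hsum := aux_sum c hc0 hc1 L hL
  have heq2 : (Real.logb 2 L + Real.logb 2 c) / ((K:ℝ) - 1)
      = (Real.log L + Real.log c) / a := by
    have h1 : ((K:ℝ) - 1) ≠ 0 := by linarith
    have h2 : Real.log 2 ≠ 0 := ne_of_gt hlog2
    rw [Real.logb, Real.logb, ha_def]
    field_simp
  rw [heq2]
  gcongr
end
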